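/- Every α-free economy with social justice admits a pure strategy Nash equilibrium: for any α ∈ [0,1], the finite strategic form game in which player i's payoff at profile x is ES^α_i(f,x) = α·Sh_i(f,x) + (1-α)·f(x)/n has a pure strategy Nash equilibrium. -/

import Mathlib

open Finset

noncomputable section

variable {ι : Type*}

/-- Sub-profile of `x` relative to the reference profile `o`:
agents in `S` play their `x`-coordinate, all others play their reference action. -/
def subp [DecidableEq ι] {X : ι → Type*} (o x : ∀ i, X i) (S : Finset ι) : ∀ i, X i :=
  fun j => if j ∈ S then x j else o j

/-- The set of active agents at profile `x` (those deviating from the reference `o`). -/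
def active [DecidableEq ι] [Fintype ι] {X : ι → Type*} [∀ i, DecidableEq (X i)]
    (o x : ∀ i, X i) : Finset ι :=
  Finset.univ.filter fun j => x j ≠ o j

/-- The multivariate Shapley pay scheme. -/
def Sh [DecidableEq ι] [Fintype ι] {X : ι → Type*} [∀ i, DecidableEq (X i)]
    (o : ∀ i, X i) (f : (∀ i, X i) → ℝ) (i : ι) (x : ∀ i, X i) : ℝ :=
  ∑ S ∈ ((active o x).erase i).powerset,
    ((S.card.factorial * ((active o x).card - S.card - 1).factorial : ℝ) /
        ((active o x).card.factorial)) *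
      (f (subp o x (insert i S)) - f (subp o x S))

end

noncomputable section

/-- The egalitarian Shapley pay scheme with meritocratic weight `α`. -/
def ES {ι : Type*} [DecidableEq ι] [Fintype ι] {X : ι → Type*} [∀ i, DecidableEq (X i)]
    (α : ℝ) (o : ∀ i, X i) (f : (∀ i, X i) → ℝ) (i : ι) (x : ∀ i, X i) : ℝ :=
  α * Sh o f i x + (1 - α) * f x / (Fintype.card ι)

end

/-!
The game is an exact potential game. By Hart and Mas-Colell, the Shapley value of player `i`
in the cooperative game `v(S) = f (subp o x S)` on the active agents `A` is `P(A) - P(A \ {i})`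
for the potential `P(A) = ∑_{S ⊆ A} (|S|-1)! (|A|-|S|)! / |A|! · v(S)`, and removing `i` from
the active agents is the deviation of `i` to `o i`, which does not depend on `x i`. Hence
`ES^α_i(x) = Φ(x) - α P(x with i reset)` where `Φ = α P + (1-α) f / n`, and a maximiser of
`Φ` over the finite set of profiles is a pure Nash equilibrium.
-/

open Finset Function Nat

noncomputable section

section Potential

variable {ι : Type*} {X : ι → Type*}

def IsExactPotential [DecidableEq ι] (u : ι → (∀ i, X i) → ℝ) (Φ : (∀ i, X i) → ℝ) : Prop :=
  ∀ (i : ι) (x : ∀ i, X i) (y : X i),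
    u i (update x i y) - u i x = Φ (update x i y) - Φ x

theorem IsExactPotential.exists_nash [Finite (∀ i, X i)] [Nonempty (∀ i, X i)]
    [DecidableEq ι] {u : ι → (∀ i, X i) → ℝ} {Φ : (∀ i, X i) → ℝ}
    (h : IsExactPotential u Φ) :
    ∃ x : ∀ i, X i, ∀ i (y : X i), u i (update x i y) ≤ u i x := by
  obtain ⟨x, hx⟩ := Finite.exists_max Φ
  refine ⟨x, fun i y => ?_⟩
  linarith [h i x y, hx (update x i y)]

end Potential

section Cooperative

variable {ι : Type*} [DecidableEq ι]

def shapleyValue (A : Finset ι) (v : Finset ι → ℝ) (i : ι) : ℝ :=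
  ∑ S ∈ (A.erase i).powerset,
    ((S.card ! * (A.card - S.card - 1)! : ℝ) / A.card !) * (v (insert i S) - v S)

/-- The Hart–Mas-Colell potential. The weight of `S = ∅` is junk (truncated `0 - 1`); it only
ever multiplies `v ∅ = 0`. -/
def hmcPotential (A : Finset ι) (v : Finset ι → ℝ) : ℝ :=
  ∑ S ∈ A.powerset, ((S.card - 1)! * (A.card - S.card)! / A.card ! : ℝ) * v S

theorem shapleyValue_eq_zero_of_null {A : Finset ι} {v : Finset ι → ℝ} {i : ι}
    (hi : ∀ S, v (insert i S) = v S) : shapleyValue A v i = 0 :=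
  Finset.sum_eq_zero fun S _ => by rw [hi, sub_self, mul_zero]

theorem hmcWeight_eq_add {t b : ℕ} (ht : 0 < t) (htb : t ≤ b) :
    ((t - 1)! * (b - t)! / b ! : ℝ) =
      (t - 1)! * (b + 1 - t)! / (b + 1)! + t ! * (b + 1 - t - 1)! / (b + 1)! := by
  obtain ⟨s, rfl⟩ : ∃ s, t = s + 1 := ⟨t - 1, by omega⟩
  obtain ⟨r, rfl⟩ : ∃ r, b = s + 1 + r := ⟨b - (s + 1), by omega⟩
  rw [show s + 1 - 1 = s by omega, show s + 1 + r - (s + 1) = r by omega,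
    show s + 1 + r + 1 - (s + 1) - 1 = r by omega,
    show s + 1 + r + 1 - (s + 1) = r + 1 by omega,
    factorial_succ (s + 1 + r), factorial_succ r, factorial_succ s]
  field_simp
  push_cast
  ring

theorem shapleyValue_insert_eq_hmcPotential_sub {B : Finset ι} {v : Finset ι → ℝ} {i : ι}
    (hv : v ∅ = 0) (hi : i ∉ B) :
    shapleyValue (insert i B) v i = hmcPotential (insert i B) v - hmcPotential B v := by
  rw [shapleyValue, hmcPotential, hmcPotential, erase_insert hi, sum_powerset_insert hi,
    ← sum_add_distrib, ← sum_sub_distrib, card_insert_of_notMem hi]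
  refine sum_congr rfl fun T hT => ?_
  have hiT : i ∉ T := fun h => hi (mem_powerset.mp hT h)
  have hTB : T.card ≤ B.card := card_le_card (mem_powerset.mp hT)
  rw [card_insert_of_notMem hiT, add_tsub_cancel_right,
    show B.card + 1 - (T.card + 1) = B.card + 1 - T.card - 1 by omega]
  rcases T.eq_empty_or_nonempty with rfl | hne
  · simp [hv]
  · rw [hmcWeight_eq_add hne.card_pos hTB]
    ring

end Cooperative

section Profiles

variable {ι : Type*} [DecidableEq ι] {X : ι → Type*} (o : ∀ i, X i)

theorem subp_empty (x : ∀ i, X i) : subp o x ∅ = o := by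
  funext j
  simp [subp]

theorem subp_update_of_notMem {x : ∀ i, X i} {i : ι} {S : Finset ι} (hi : i ∉ S) (y : X i) :
    subp o (update x i y) S = subp o x S := by
  funext j
  by_cases hj : j ∈ S
  · simp [subp, hj, update_of_ne (ne_of_mem_of_not_mem hj hi)]
  · simp [subp, hj]

theorem subp_insert_of_eq {x : ∀ i, X i} {i : ι} (hi : x i = o i) (S : Finset ι) :
    subp o x (insert i S) = subp o x S := by
  funext j
  by_cases hj : j = i
  · subst hj
    simp [subp, hi]
  · simp [subp, hj]

variable [Fintype ι] [∀ i, DecidableEq (X i)]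

theorem active_update_ref (x : ∀ i, X i) (i : ι) :
    active o (update x i (o i)) = (active o x).erase i := by
  ext j
  by_cases hj : j = i
  · subst hj
    simp [active]
  · simp [active, hj]

def profilePotential (f : (∀ i, X i) → ℝ) (x : ∀ i, X i) : ℝ :=
  hmcPotential (active o x) fun S => f (subp o x S)

theorem Sh_eq_shapleyValue (f : (∀ i, X i) → ℝ) (i : ι) (x : ∀ i, X i) :
    Sh o f i x = shapleyValue (active o x) (fun S => f (subp o x S)) i :=
  rfl

theorem Sh_eq_profilePotential_sub {f : (∀ i, X i) → ℝ} (hf : f o = 0) (i : ι)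
    (x : ∀ i, X i) :
    Sh o f i x = profilePotential o f x - profilePotential o f (update x i (o i)) := by
  by_cases hiA : i ∈ active o x
  · obtain ⟨B, hiB, hA⟩ : ∃ B, i ∉ B ∧ active o x = insert i B :=
      ⟨_, notMem_erase i _, (insert_erase hiA).symm⟩
    have hupd : profilePotential o f (update x i (o i)) =
        hmcPotential B fun S => f (subp o x S) := by
      rw [profilePotential, active_update_ref, hA, erase_insert hiB]
      refine sum_congr rfl fun S hS => ?_
      dsimp only
      rw [subp_update_of_notMem o fun h => hiB (mem_powerset.mp hS h)]
    rw [hupd, profilePotential, Sh_eq_shapleyValue, hA,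
      shapleyValue_insert_eq_hmcPotential_sub (by rwa [subp_empty]) hiB]
  · have hxi : x i = o i := by simpa [active] using hiA
    rw [← hxi, update_eq_self, sub_self, Sh_eq_shapleyValue,
      shapleyValue_eq_zero_of_null fun S => by rw [subp_insert_of_eq o hxi]]

theorem isExactPotential_ES {f : (∀ i, X i) → ℝ} (hf : f o = 0) (α : ℝ) :
    IsExactPotential (fun i => ES α o f i)
      (fun x => α * profilePotential o f x + (1 - α) * f x / Fintype.card ι) := by
  intro i x y
  simp only [ES, Sh_eq_profilePotential_sub o hf, update_idem]
  ring

end Profiles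

end

theorem stmt_8_general {ι : Type*} [DecidableEq ι] [Fintype ι] {X : ι → Type*}
    [∀ i, Fintype (X i)] [∀ i, DecidableEq (X i)]
    (o : ∀ i, X i) (f : (∀ i, X i) → ℝ) (hf : f o = 0)
    (α : ℝ) :
    ∃ xs : ∀ i, X i, ∀ i : ι, ∀ y : X i,
      ES α o f i (Function.update xs i y) ≤ ES α o f i xs :=
  have : Nonempty (∀ i, X i) := ⟨o⟩
  IsExactPotential.exists_nash (isExactPotential_ES o hf α)

/-- Every α-free economy with social justice admits a pure strategy
Nash equilibrium. -/
theorem stmt_8 {ι : Type*} [DecidableEq ι] [Fintype ι] {X : ι → Type*}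
    [∀ i, Fintype (X i)] [∀ i, DecidableEq (X i)]
    (o : ∀ i, X i) (f : (∀ i, X i) → ℝ) (hf : f o = 0)
    (α : ℝ) (hα0 : 0 ≤ α) (hα1 : α ≤ 1) :
    ∃ xs : ∀ i, X i, ∀ i : ι, ∀ y : X i,
      ES α o f i (Function.update xs i y) ≤ ES α o f i xs :=
  stmt_8_general o f hf α
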